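/- Iséki's extension: given a BCK-algebra A, adjoining a new element ⊤ with x·⊤ = 0, ⊤·⊤ = 0, and ⊤·x = ⊤ for all x ∈ A yields a bounded BCK-algebra with greatest element ⊤, and this extension is never commutative if A has a nonzero element. -/
import Mathlib


/-- A BCK-algebra: an algebra ⟨A; ·, 0⟩ satisfying (BCK1)–(BCK5). -/
class BCK (A : Type*) extends Zero A where
  op : A → A → A
  bck1 : ∀ x y z : A, op (op (op x y) (op x z)) (op z y) = 0
  bck2 : ∀ x y : A, op (op x (op x y)) y = 0
  bck3 : ∀ x : A, op x x = 0
  bck4 : ∀ x : A, op 0 x = 0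
  bck5 : ∀ x y : A, op x y = 0 → op y x = 0 → x = y
/-- Iséki's extension: adjoining a new top element ⊤ (here `none` in `Option A`)
to a BCK-algebra A, with x·⊤ = 0, ⊤·⊤ = 0, ⊤·x = ⊤ for x ∈ A, yields a bounded
BCK-algebra (zero element `some 0`, greatest element ⊤), and it is never
commutative if A has a nonzero element. -/
theorem stmt_7 (A : Type*) [BCK A]
    (e : Option A → Option A → Option A)
    (he_top : ∀ x : Option A, e x none = some 0)
    (he_top_left : ∀ a : A, e none (some a) = none)
    (he_in : ∀ a b : A, e (some a) (some b) = some (BCK.op a b)) :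
    (∀ x y z : Option A, e (e (e x y) (e x z)) (e z y) = some 0) ∧
    (∀ x y : Option A, e (e x (e x y)) y = some 0) ∧
    (∀ x : Option A, e x x = some 0) ∧
    (∀ x : Option A, e (some 0) x = some 0) ∧
    (∀ x y : Option A, e x y = some 0 → e y x = some 0 → x = y) ∧
    (∀ x : Option A, e x none = some 0) ∧
    ((∃ a : A, a ≠ 0) →
      ∃ x y : Option A, e y (e y x) ≠ e x (e x y)) := by
  refine ⟨?_, ?_, ?_, ?_, ?_, he_top, ?_⟩
  · intro x y z
    rcases y with _ | b
    · rw [he_top, he_top]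
      rcases x with _ | a <;> rcases z with _ | c <;>
        simp [he_top, he_top_left, he_in, BCK.bck3, BCK.bck4]
    · rcases z with _ | c
      · rw [he_top_left, he_top]
      · rcases x with _ | a
        · rw [he_top_left, he_top_left, he_top, he_in, he_in, BCK.bck4]
        · rw [he_in, he_in, he_in, he_in, he_in, BCK.bck1]
  · intro x y
    rcases y with _ | b
    · rw [he_top]
    · rcases x with _ | a
      · rw [he_top_left, he_top, he_in, BCK.bck4]
      · rw [he_in, he_in, he_in, BCK.bck2]
  · intro x
    rcases x with _ | a
    · exact he_top none
    · rw [he_in, BCK.bck3]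
  · intro x
    rcases x with _ | a
    · exact he_top _
    · rw [he_in, BCK.bck4]
  · intro x y hxy hyx
    rcases x with _ | a <;> rcases y with _ | b
    · rfl
    · rw [he_top_left] at hxy; exact absurd hxy (by simp)
    · rw [he_top_left] at hyx; exact absurd hyx (by simp)
    · rw [he_in] at hxy hyx
      exact congrArg some (BCK.bck5 a b (Option.some_injective _ hxy)
        (Option.some_injective _ hyx))
  · rintro ⟨a, ha⟩
    refine ⟨some a, none, ?_⟩
    rw [he_top_left, he_top, he_top, he_in]
    intro h
    exact ha (BCK.bck5 a 0 ((Option.some_injective _ h.symm)) (BCK.bck4 a))
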